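/- arXiv:1805.05273 — 2 statements merged into one kernel-verified Lean document; each statement's English description precedes it below -/
import Mathlib

section
/- Let n_1, …, n_m be integers with each n_i ≥ 2 and let G = K_{n_1} × ⋯ × K_{n_m} be the Hamming graph H_{n_1,…,n_m}. Then M_N(G) = (∏_{i=1}^m n_i)·[∑_i (n_i−1)^4 + 3·∑_{(i,j): i≠j} (n_i−1)^2(n_j−1)^2 + 6·∑_{(i,j,k) pairwise distinct} (n_i−1)^2(n_j−1)(n_k−1) + 4·∑_{(i,j): i≠j} (n_i−1)^3(n_j−1) + ∑_{(i,j,k,l) pairwise distinct} (n_i−1)(n_j−1)(n_k−1)(n_l−1)], where each multiple sum runs over ordered tuples of pairwise distinct indices; equivalently M_N(G) = (∏_i n_i)·(∑_i (n_i−1))^4. -/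
open Finset
open scoped Classical

/-- Sum of degrees of the neighbours of a vertex: `δ_G(v) = ∑_{u ∈ N_G(v)} deg_G(u)`. -/
noncomputable def neighborDegSum {V : Type*} [Fintype V] (G : SimpleGraph V) (v : V) : ℕ :=
  ∑ u ∈ G.neighborFinset v, G.degree u

/-- The first Zagreb index `M₁(G) = ∑_{v ∈ V(G)} deg_G(v)²`. -/
noncomputable def firstZagreb {V : Type*} [Fintype V] (G : SimpleGraph V) : ℕ :=
  ∑ v, (G.degree v) ^ 2

/-- The second Zagreb index `M₂(G) = ∑_{uv ∈ E(G)} deg_G(u)·deg_G(v)`. -/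
noncomputable def secondZagreb {V : Type*} [Fintype V] (G : SimpleGraph V) : ℕ :=
  ∑ e ∈ G.edgeFinset,
    Sym2.lift ⟨fun u w => G.degree u * G.degree w, fun _ _ => mul_comm _ _⟩ e

/-- The Neighbourhood Zagreb index `M_N(G) = ∑_{v ∈ V(G)} δ_G(v)²`. -/
noncomputable def neighborhoodZagreb {V : Type*} [Fintype V] (G : SimpleGraph V) : ℕ :=
  ∑ v, (neighborDegSum G v) ^ 2

/-- The `n`-fold Cartesian (box) product `G₁ × ⋯ × Gₙ`: vertices are tuples, and two
tuples are adjacent iff they are adjacent in exactly one coordinate and equal elsewhere. -/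
def boxProdPi {n : ℕ} {V : Fin n → Type*} (G : ∀ i, SimpleGraph (V i)) :
    SimpleGraph (∀ i, V i) where
  Adj a b := ∃ i, (G i).Adj (a i) (b i) ∧ ∀ j, j ≠ i → a j = b j
  symm := ⟨by
    rintro a b ⟨i, hi, hj⟩
    exact ⟨i, (G i).symm.symm _ _ hi, fun j hji => (hj j hji).symm⟩⟩
  loopless := ⟨by
    rintro a ⟨i, hi, -⟩
    exact (G i).loopless.irrefl _ hi⟩

/-- The Hamming graph `H_{n₁,…,n_m} = K_{n₁} × ⋯ × K_{n_m}`. -/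
def hammingGraph {m : ℕ} (f : Fin m → ℕ) : SimpleGraph (∀ i, Fin (f i)) :=
  boxProdPi (fun i => SimpleGraph.completeGraph (Fin (f i)))

/-!
Every neighbour of a vertex `v` of `K_{n₁} × ⋯ × K_{n_m}` is obtained by changing exactly one
coordinate of `v`, so the graph is regular of degree `d = ∑ (nᵢ - 1)`. In a `d`-regular graph
`δ(v) = d²`, whence `M_N = |V| d⁴ = (∏ nᵢ) d⁴`. The first formula is the multinomial expansion
of `d⁴` grouped by which of the four indices coincide; it is checked through power sums, since
a sum over pairwise distinct indices reduces to one with fewer indices by letting the last index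
run over everything and subtracting the terms where it meets an earlier one.
-/

section PowerSums

variable {ι R : Type*} [Fintype ι] [DecidableEq ι] [CommRing R]

theorem sum_sum_erase_mul (x y : ι → R) :
    ∑ i, ∑ j ∈ univ.erase i, x i * y j = (∑ i, x i) * (∑ i, y i) - ∑ i, x i * y i := by
  simp only [← mul_sum, sum_erase_eq_sub (mem_univ _), sum_sub_distrib, sum_mul]

theorem sum_sum_erase_sum_erase_mul (x y z : ι → R) :
    ∑ i, ∑ j ∈ univ.erase i, ∑ k ∈ (univ.erase i).erase j, x i * y j * z k =
      (∑ i, ∑ j ∈ univ.erase i, x i * y j) * (∑ i, z i) -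
        ∑ i, ∑ j ∈ univ.erase i, (x i * z i) * y j - ∑ i, ∑ j ∈ univ.erase i, x i * (y j * z j) := by
  have inner : ∀ i, ∀ j ∈ univ.erase i, ∑ k ∈ (univ.erase i).erase j, x i * y j * z k =
      x i * y j * (∑ k, z k) - (x i * z i) * y j - x i * (y j * z j) := fun i j hj => by
    rw [← mul_sum, sum_erase_eq_sub hj, sum_erase_eq_sub (mem_univ i)]
    ring
  simp only [sum_congr rfl (inner _), sum_sub_distrib, sum_mul]

theorem sum_sum_erase_sum_erase_sum_erase_mul (x y z w : ι → R) :
    ∑ i, ∑ j ∈ univ.erase i, ∑ k ∈ (univ.erase i).erase j,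
        ∑ l ∈ ((univ.erase i).erase j).erase k, x i * y j * z k * w l =
      (∑ i, ∑ j ∈ univ.erase i, ∑ k ∈ (univ.erase i).erase j, x i * y j * z k) * (∑ i, w i) -
        ∑ i, ∑ j ∈ univ.erase i, ∑ k ∈ (univ.erase i).erase j, (x i * w i) * y j * z k -
        ∑ i, ∑ j ∈ univ.erase i, ∑ k ∈ (univ.erase i).erase j, x i * (y j * w j) * z k -
        ∑ i, ∑ j ∈ univ.erase i, ∑ k ∈ (univ.erase i).erase j, x i * y j * (z k * w k) := by
  have inner : ∀ i, ∀ j ∈ univ.erase i, ∀ k ∈ (univ.erase i).erase j,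
      ∑ l ∈ ((univ.erase i).erase j).erase k, x i * y j * z k * w l =
      x i * y j * z k * (∑ l, w l) - (x i * w i) * y j * z k - x i * (y j * w j) * z k
        - x i * y j * (z k * w k) := fun i j hj k hk => by
    rw [← mul_sum, sum_erase_eq_sub hk, sum_erase_eq_sub hj, sum_erase_eq_sub (mem_univ i)]
    ring
  simp only [sum_congr rfl fun j hj => sum_congr rfl (inner _ j hj), sum_sub_distrib, sum_mul]

theorem sum_pow_four_eq (A : ι → R) :
    ∑ i, A i ^ 4 +
      3 * ∑ i, ∑ j ∈ univ.erase i, A i ^ 2 * A j ^ 2 +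
      6 * ∑ i, ∑ j ∈ univ.erase i, ∑ k ∈ (univ.erase i).erase j, A i ^ 2 * A j * A k +
      4 * ∑ i, ∑ j ∈ univ.erase i, A i ^ 3 * A j +
      ∑ i, ∑ j ∈ univ.erase i, ∑ k ∈ (univ.erase i).erase j,
        ∑ l ∈ ((univ.erase i).erase j).erase k, A i * A j * A k * A l
    = (∑ i, A i) ^ 4 := by
  simp only [sum_sum_erase_sum_erase_sum_erase_mul, sum_sum_erase_sum_erase_mul, sum_sum_erase_mul]
  ring_nf

end PowerSums

namespace SimpleGraph

variable {n : ℕ} {V : Fin n → Type*} (G : ∀ i, SimpleGraph (V i))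

theorem boxProdPi_adj_iff_exists_update {v u : ∀ i, V i} :
    (boxProdPi G).Adj v u ↔ ∃ i, ∃ x, (G i).Adj (v i) x ∧ Function.update v i x = u := by
  simp only [Function.update_eq_iff]
  constructor
  · rintro ⟨i, hadj, heq⟩
    exact ⟨i, u i, hadj, rfl, heq⟩
  · rintro ⟨i, x, hadj, rfl, heq⟩
    exact ⟨i, hadj, heq⟩

variable [∀ i, Fintype (V i)]

theorem neighborFinset_boxProdPi (v : ∀ i, V i) :
    (boxProdPi G).neighborFinset v =
      univ.biUnion fun i => ((G i).neighborFinset (v i)).map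
        ⟨Function.update v i, Function.update_injective v i⟩ := by
  ext u
  simp [boxProdPi_adj_iff_exists_update]

theorem degree_boxProdPi (v : ∀ i, V i) :
    (boxProdPi G).degree v = ∑ i, (G i).degree (v i) := by
  rw [← card_neighborFinset_eq_degree, neighborFinset_boxProdPi, card_biUnion]
  · simp
  · intro i _ j _ hij
    rw [Function.onFun, Finset.disjoint_left]
    simp only [mem_map, mem_neighborFinset]
    rintro _ ⟨x, hx, rfl⟩ ⟨y, -, hxy⟩
    have := congrFun hxy i
    simp only [Function.Embedding.coeFn_mk, Function.update_of_ne hij, Function.update_self] at this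
    exact (G i).ne_of_adj hx this

theorem IsRegularOfDegree.boxProdPi {d : Fin n → ℕ} (h : ∀ i, (G i).IsRegularOfDegree (d i)) :
    (boxProdPi G).IsRegularOfDegree (∑ i, d i) := fun v => by
  simp only [degree_boxProdPi, (h _).degree_eq]

end SimpleGraph

theorem hammingGraph_isRegularOfDegree {m : ℕ} (f : Fin m → ℕ) :
    (hammingGraph f).IsRegularOfDegree (∑ i, (f i - 1)) := by
  unfold hammingGraph
  refine SimpleGraph.IsRegularOfDegree.boxProdPi _ fun i x => ?_
  -- `convert` reconciles the classical `Fintype` instances on neighbour sets with Mathlib's.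
  convert SimpleGraph.complete_graph_degree x
  simp

section Regular

variable {V : Type*} [Fintype V] {G : SimpleGraph V} {d : ℕ}

theorem neighborDegSum_of_isRegularOfDegree (h : G.IsRegularOfDegree d) (v : V) :
    neighborDegSum G v = d * d := by
  rw [neighborDegSum, sum_congr rfl fun u _ => h.degree_eq u, sum_const, smul_eq_mul,
    G.card_neighborFinset_eq_degree, h.degree_eq]

theorem neighborhoodZagreb_of_isRegularOfDegree (h : G.IsRegularOfDegree d) :
    neighborhoodZagreb G = Fintype.card V * d ^ 4 := by
  simp only [neighborhoodZagreb, neighborDegSum_of_isRegularOfDegree h, sum_const, card_univ,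
    smul_eq_mul]
  ring

end Regular

theorem neighborhoodZagreb_hammingGraph {m : ℕ} (f : Fin m → ℕ) (hf : ∀ i, 2 ≤ f i) :
    (neighborhoodZagreb (hammingGraph f) : ℤ) =
      (∏ i, (f i : ℤ)) *
        (∑ i, ((f i : ℤ) - 1) ^ 4 +
          3 * ∑ i, ∑ j ∈ univ.erase i, ((f i : ℤ) - 1) ^ 2 * ((f j : ℤ) - 1) ^ 2 +
          6 * ∑ i, ∑ j ∈ univ.erase i, ∑ k ∈ (univ.erase i).erase j,
            ((f i : ℤ) - 1) ^ 2 * ((f j : ℤ) - 1) * ((f k : ℤ) - 1) +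
          4 * ∑ i, ∑ j ∈ univ.erase i, ((f i : ℤ) - 1) ^ 3 * ((f j : ℤ) - 1) +
          ∑ i, ∑ j ∈ univ.erase i, ∑ k ∈ (univ.erase i).erase j,
            ∑ l ∈ ((univ.erase i).erase j).erase k,
            ((f i : ℤ) - 1) * ((f j : ℤ) - 1) * ((f k : ℤ) - 1) * ((f l : ℤ) - 1)) ∧
    (neighborhoodZagreb (hammingGraph f) : ℤ) =
      (∏ i, (f i : ℤ)) * (∑ i, ((f i : ℤ) - 1)) ^ 4 := by
  have hM : (neighborhoodZagreb (hammingGraph f) : ℤ) =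
      (∏ i, (f i : ℤ)) * (∑ i, ((f i : ℤ) - 1)) ^ 4 := by
    rw [neighborhoodZagreb_of_isRegularOfDegree (hammingGraph_isRegularOfDegree f)]
    push_cast [Fintype.card_pi, Fintype.card_fin, Nat.cast_sub (one_le_two.trans (hf _))]
    rfl
  exact ⟨by rw [hM, sum_pow_four_eq], hM⟩
end

section
/- For finite simple graphs G_1 and G_2, the Neighbourhood Zagreb index of their wreath product satisfies M_N(G_1[G_2]) = |V_2|^5·M_N(G_1) + |V_1|·M_N(G_2) + 12|V_2|·|E_2|^2·M_1(G_1) + 8|E_1|·|E_2|·M_1(G_2) + 16|V_2|^3·|E_2|·M_2(G_1) + 8|V_2|·|E_1|·M_2(G_2) + 3|V_2|^2·M_1(G_1)·M_1(G_2). -/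
open Finset
open scoped Classical

/-- The wreath product (composition) `G₁[G₂]`: `(u₁,v₁)` adjacent to `(u₂,v₂)` iff
`u₁u₂ ∈ E₁`, or (`u₁ = u₂` and `v₁v₂ ∈ E₂`). -/
def wreathProd {V W : Type*} (G₁ : SimpleGraph V) (G₂ : SimpleGraph W) :
    SimpleGraph (V × W) where
  Adj x y := G₁.Adj x.1 y.1 ∨ (x.1 = y.1 ∧ G₂.Adj x.2 y.2)
  symm := by
    constructor
    rintro x y (h | ⟨h, h'⟩)
    · exact Or.inl (G₁.adj_symm h)
    · exact Or.inr ⟨h.symm, G₂.adj_symm h'⟩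
  loopless := by
    constructor
    rintro x (h | ⟨-, h⟩)
    · exact G₁.loopless.irrefl _ h
    · exact G₂.loopless.irrefl _ h

/-!
Writing `n = |V₂|`, `m = |E₂|`, the neighbours of `(u, v)` in `G₁[G₂]` are the whole fibres over
the neighbours of `u` together with `{u} × N_{G₂}(v)`, so `deg(u, v) = n·deg u + deg v` and
`δ(u, v) = n²·δ(u) + 2m·deg u + n·deg u·deg v + δ(v)`. Squaring and summing over a fibre, and then
over `V₁`, leaves sums of `δ`, `δ²`, `deg²` and `deg·δ` over each factor; by double counting
`∑ δ = M₁` and `∑ deg·δ = 2·M₂`.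
-/

open SimpleGraph

section DoubleCounting

variable {V M : Type*} [Fintype V] [AddCommMonoid M] (G : SimpleGraph V)

lemma sum_neighborFinset_comm (f : V → V → M) :
    ∑ v, ∑ u ∈ G.neighborFinset v, f v u = ∑ v, ∑ u ∈ G.neighborFinset v, f u v :=
  sum_comm' (by simp [and_comm, adj_comm])

lemma sum_dart_eq_sum_neighborFinset (f : V → V → M) :
    ∑ d : G.Dart, f d.fst d.snd = ∑ v, ∑ u ∈ G.neighborFinset v, f v u := by
  rw [← sum_fiberwise_of_maps_to (g := fun d : G.Dart => d.fst) (t := univ)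
    (fun _ _ => mem_univ _)]
  refine sum_congr rfl fun v _ => ?_
  rw [G.dart_fst_fiber v, sum_image fun _ _ _ _ h => G.dartOfNeighborSet_injective v h]
  exact sum_set_coe (f := f v) (s := G.neighborSet v)

lemma sum_dart_edge (f : Sym2 V → M) :
    ∑ d : G.Dart, f d.edge = 2 • ∑ e ∈ G.edgeFinset, f e := by
  rw [← sum_fiberwise_of_maps_to (g := Dart.edge) (t := G.edgeFinset)
    (fun d _ => by simp [Dart.edge_mem]), smul_sum]
  refine sum_congr rfl fun e he => ?_
  rw [sum_congr rfl fun d hd => by rw [(mem_filter.mp hd).2], sum_const,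
    G.dart_edge_fiber_card e (mem_edgeFinset.mp he)]

lemma sum_neighborDegSum : ∑ v, neighborDegSum G v = firstZagreb G := by
  calc ∑ v, neighborDegSum G v
      = ∑ v, ∑ u ∈ G.neighborFinset v, G.degree v :=
        sum_neighborFinset_comm (M := ℕ) G fun _ u => G.degree u
    _ = firstZagreb G := by simp [firstZagreb, sq]

lemma sum_degree_mul_neighborDegSum :
    ∑ v, G.degree v * neighborDegSum G v = 2 * secondZagreb G := by
  simp only [neighborDegSum, mul_sum]
  rw [← sum_dart_eq_sum_neighborFinset G fun v u => G.degree v * G.degree u, secondZagreb,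
    ← smul_eq_mul, ← sum_dart_edge]
  rfl

end DoubleCounting

section WreathProduct

variable {V W : Type*} [Fintype V] [Fintype W] (G₁ : SimpleGraph V) (G₂ : SimpleGraph W)

lemma neighborFinset_wreathProd (u : V) (v : W) :
    (wreathProd G₁ G₂).neighborFinset (u, v) =
      G₁.neighborFinset u ×ˢ univ ∪ {u} ×ˢ G₂.neighborFinset v := by
  ext ⟨a, b⟩
  simp only [mem_neighborFinset, mem_union, mem_product, mem_singleton, mem_univ, and_true]
  exact or_congr Iff.rfl (and_congr eq_comm Iff.rfl)

lemma disjoint_neighborFinset_wreathProd (u : V) (v : W) :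
    Disjoint (G₁.neighborFinset u ×ˢ (univ : Finset W)) ({u} ×ˢ G₂.neighborFinset v) := by
  rw [Finset.disjoint_left]
  rintro ⟨a, b⟩ hfibre hsame
  simp only [mem_product, mem_singleton, mem_neighborFinset] at hfibre hsame
  exact G₁.loopless.irrefl u (hsame.1 ▸ hfibre.1)

lemma degree_wreathProd (u : V) (v : W) :
    (wreathProd G₁ G₂).degree (u, v) = Fintype.card W * G₁.degree u + G₂.degree v := by
  rw [← card_neighborFinset_eq_degree, neighborFinset_wreathProd,
    card_union_of_disjoint (disjoint_neighborFinset_wreathProd G₁ G₂ u v)]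
  simp [mul_comm]

lemma neighborDegSum_wreathProd (u : V) (v : W) :
    neighborDegSum (wreathProd G₁ G₂) (u, v) =
      Fintype.card W ^ 2 * neighborDegSum G₁ u + 2 * #G₂.edgeFinset * G₁.degree u +
        Fintype.card W * G₁.degree u * G₂.degree v + neighborDegSum G₂ v := by
  have fibre_sum (x : V) : ∑ y, (wreathProd G₁ G₂).degree (x, y) =
      Fintype.card W ^ 2 * G₁.degree x + 2 * #G₂.edgeFinset := by
    simp only [degree_wreathProd, sum_add_distrib, sum_const, card_univ, smul_eq_mul,
      G₂.sum_degrees_eq_twice_card_edges]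
    ring
  rw [neighborDegSum, neighborFinset_wreathProd,
    sum_union (disjoint_neighborFinset_wreathProd G₁ G₂ u v), sum_product, sum_product,
    sum_singleton, sum_congr rfl fun x _ => fibre_sum x]
  simp only [sum_add_distrib, ← mul_sum, sum_const, smul_eq_mul,
    card_neighborFinset_eq_degree, degree_wreathProd, neighborDegSum]
  ring

lemma sum_sq_neighborDegSum_wreathProd (u : V) :
    ∑ v, neighborDegSum (wreathProd G₁ G₂) (u, v) ^ 2 =
      Fintype.card W ^ 5 * neighborDegSum G₁ u ^ 2 +
      (12 * Fintype.card W * #G₂.edgeFinset ^ 2 + Fintype.card W ^ 2 * firstZagreb G₂) *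
        G₁.degree u ^ 2 +
      8 * Fintype.card W ^ 3 * #G₂.edgeFinset * (G₁.degree u * neighborDegSum G₁ u) +
      2 * Fintype.card W ^ 2 * firstZagreb G₂ * neighborDegSum G₁ u +
      (4 * #G₂.edgeFinset * firstZagreb G₂ + 4 * Fintype.card W * secondZagreb G₂) *
        G₁.degree u +
      neighborhoodZagreb G₂ := by
  set A := Fintype.card W ^ 2 * neighborDegSum G₁ u + 2 * #G₂.edgeFinset * G₁.degree u
  set B := Fintype.card W * G₁.degree u
  calc ∑ v, neighborDegSum (wreathProd G₁ G₂) (u, v) ^ 2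
      = ∑ v, (A ^ 2 + B ^ 2 * G₂.degree v ^ 2 + neighborDegSum G₂ v ^ 2 +
          2 * A * B * G₂.degree v + 2 * A * neighborDegSum G₂ v +
          2 * B * (G₂.degree v * neighborDegSum G₂ v)) :=
        sum_congr rfl fun v _ => by rw [neighborDegSum_wreathProd]; ring
    _ = Fintype.card W * A ^ 2 + B ^ 2 * firstZagreb G₂ + neighborhoodZagreb G₂ +
          2 * A * B * (2 * #G₂.edgeFinset) + 2 * A * firstZagreb G₂ +
          2 * B * (2 * secondZagreb G₂) := by
        simp only [sum_add_distrib, ← mul_sum, sum_const, card_univ, smul_eq_mul,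
          G₂.sum_degrees_eq_twice_card_edges, sum_neighborDegSum, sum_degree_mul_neighborDegSum]
        rfl
    _ = _ := by ring

end WreathProduct

theorem neighborhoodZagreb_wreathProd {V W : Type*} [Fintype V] [Fintype W]
    (G₁ : SimpleGraph V) (G₂ : SimpleGraph W) :
    neighborhoodZagreb (wreathProd G₁ G₂) =
      (Fintype.card W) ^ 5 * neighborhoodZagreb G₁ +
      Fintype.card V * neighborhoodZagreb G₂ +
      12 * Fintype.card W * G₂.edgeFinset.card ^ 2 * firstZagreb G₁ +
      8 * G₁.edgeFinset.card * G₂.edgeFinset.card * firstZagreb G₂ +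
      16 * (Fintype.card W) ^ 3 * G₂.edgeFinset.card * secondZagreb G₁ +
      8 * Fintype.card W * G₁.edgeFinset.card * secondZagreb G₂ +
      3 * (Fintype.card W) ^ 2 * firstZagreb G₁ * firstZagreb G₂ := by
  rw [neighborhoodZagreb, Fintype.sum_prod_type]
  simp only [sum_sq_neighborDegSum_wreathProd, sum_add_distrib, ← mul_sum, sum_const, card_univ,
    smul_eq_mul, G₁.sum_degrees_eq_twice_card_edges, sum_neighborDegSum,
    sum_degree_mul_neighborDegSum]
  rw [← neighborhoodZagreb, ← firstZagreb]
  ring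
end
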